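/- As f → +∞, f·M₀(f) = 1 + (1/f²)·∫₀¹ (φ'(x))² dx + O(1/f³); that is, f·M₀(f) − 1 − (1/f²)·∫₀¹ (φ'(x))² dx is O(f⁻³) as f → +∞. -/

import Mathlib

open MeasureTheory intervalIntegral Asymptotics Filter

noncomputable def w0 (φ : ℝ → ℝ) (f x : ℝ) : ℝ :=
  ∫ s in (0:ℝ)..1, Real.exp (φ (x + s) - φ x - f * s)

noncomputable def M0 (φ : ℝ → ℝ) (f : ℝ) : ℝ := ∫ x in (0:ℝ)..1, w0 φ f x

noncomputable def w1 (φ : ℝ → ℝ) (f x : ℝ) : ℝ :=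
  ∫ s in (0:ℝ)..1, (w0 φ f (x + s)) ^ 2 * Real.exp (φ (x + s) - φ x - f * s)

noncomputable def M1 (φ : ℝ → ℝ) (f : ℝ) : ℝ := ∫ x in (0:ℝ)..1, w1 φ f x

/-! With `U = exp ∘ φ`, the integrand of `w₀(f, x)` is `exp (-φ x) · U (x + s) · exp (-f s)`.
Three integrations by parts against `exp (-f s)` expand `w₀(f, x)` in powers of `1/f`, and
periodicity of `U` makes every boundary term carry the factor `1 - exp (-f)`. Integrating in `x`,
`exp (-φ) U' = φ'` integrates to `0` and `exp (-φ) U'' = φ'' + φ'²` to `∫ φ'²`, while the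
remainder `f⁻³ ∫∫ exp (-φ x) U'''(x + s) exp (-f s)` is `O(f⁻⁴)` since `∫₀¹ exp (-f s) ds ≤ 1/f`. -/

open Real Function

section LaplaceExpansion

variable {f : ℝ}

theorem integral_mul_exp_neg_mul_eq {v v' : ℝ → ℝ} (hv : ∀ s, HasDerivAt v (v' s) s)
    (hv' : Continuous v') (hf : f ≠ 0) :
    ∫ s in (0:ℝ)..1, v s * exp (-(f * s)) =
      (v 0 - v 1 * exp (-f)) / f + (∫ s in (0:ℝ)..1, v' s * exp (-(f * s))) / f := by
  have hw : ∀ s, HasDerivAt (fun s => -exp (-(f * s)) / f) (exp (-(f * s))) s := by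
    intro s
    have h := ((hasDerivAt_id' s).const_mul f).fun_neg.exp.fun_neg.div_const f
    rwa [mul_one, mul_neg, neg_neg, mul_div_assoc, div_self hf, mul_one] at h
  rw [integral_mul_deriv_eq_deriv_mul (fun s _ => hv s) (fun s _ => hw s)
    (hv'.intervalIntegrable 0 1)
    ((by fun_prop : Continuous fun s => exp (-(f * s))).intervalIntegrable 0 1)]
  simp only [mul_div_assoc', mul_neg, neg_div, intervalIntegral.integral_neg,
    intervalIntegral.integral_div]
  simp only [mul_one, mul_zero, neg_zero, exp_zero]
  ring

theorem integral_mul_exp_neg_mul_eq_sum {u : ℝ → ℝ} {n : ℕ} (hu : ContDiff ℝ n u) (hf : f ≠ 0) :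
    ∫ s in (0:ℝ)..1, u s * exp (-(f * s)) =
      ∑ k ∈ Finset.range n, (iteratedDeriv k u 0 - iteratedDeriv k u 1 * exp (-f)) / f ^ (k + 1)
        + (∫ s in (0:ℝ)..1, iteratedDeriv n u s * exp (-(f * s))) / f ^ n := by
  induction n with
  | zero => simp
  | succ n ih =>
    have hstep := integral_mul_exp_neg_mul_eq (v := iteratedDeriv n u)
      (fun s => by
        rw [iteratedDeriv_succ]
        exact (hu.differentiable_iteratedDeriv' n s).hasDerivAt)
      (hu.continuous_iteratedDeriv' (n + 1)) hf
    rw [ih (hu.of_le (by norm_cast; omega)), hstep, Finset.sum_range_succ]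
    ring

theorem abs_integral_mul_exp_neg_mul_le {g : ℝ → ℝ} {B : ℝ} (hg : ∀ s, |g s| ≤ B) (hf : 0 < f) :
    |∫ s in (0:ℝ)..1, g s * exp (-(f * s))| ≤ B / f := by
  have hB : 0 ≤ B := (abs_nonneg _).trans (hg 0)
  have hexp : ∫ s in (0:ℝ)..1, B * exp (-(f * s)) = (B - B * exp (-f)) / f := by
    simpa using integral_mul_exp_neg_mul_eq (fun _ => hasDerivAt_const _ B) continuous_const hf.ne'
  have hbound := intervalIntegral.norm_integral_le_of_norm_le
    (f := fun s => g s * exp (-(f * s))) zero_le_one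
    (Eventually.of_forall fun s _ => by
      simpa [abs_mul, abs_of_pos (exp_pos _)] using
        mul_le_mul_of_nonneg_right (hg s) (exp_pos (-(f * s))).le)
    ((by fun_prop : Continuous fun s => B * exp (-(f * s))).intervalIntegrable (μ := volume) 0 1)
  rw [hexp] at hbound
  rw [← Real.norm_eq_abs]
  refine hbound.trans ?_
  gcongr
  nlinarith [exp_pos (-f)]

end LaplaceExpansion

namespace Function.Periodic

variable {g : ℝ → ℝ} {c : ℝ}

theorem iteratedDeriv (hg : Periodic g c) (n : ℕ) : Periodic (iteratedDeriv n g) c := fun x => by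
  simpa only [funext hg] using (congrFun (iteratedDeriv_comp_add_const n g c) x).symm

theorem deriv (hg : Periodic g c) : Periodic (deriv g) c := by
  simpa only [iteratedDeriv_one] using hg.iteratedDeriv 1

theorem exists_abs_le (hg : Periodic g c) (hc : c ≠ 0) (hcont : Continuous g) :
    ∃ B, ∀ x, |g x| ≤ B := by
  obtain ⟨B, hB⟩ := isBounded_iff_forall_norm_le.mp (hg.isBounded_of_continuous hc hcont)
  exact ⟨B, fun x => hB _ (Set.mem_range_self x)⟩

theorem intervalIntegral_eq_zero_of_hasDerivAt {G : ℝ → ℝ} (hG : Periodic G c)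
    (hderiv : ∀ x, HasDerivAt G (g x) x) (hg : Continuous g) : ∫ x in (0:ℝ)..c, g x = 0 := by
  rw [integral_eq_sub_of_hasDerivAt (fun x _ => hderiv x) (hg.intervalIntegrable 0 c)]
  simpa using sub_eq_zero.mpr (hG 0)

end Function.Periodic

section ExpComp

variable {φ : ℝ → ℝ}

theorem deriv_exp_comp (hφ : Differentiable ℝ φ) :
    deriv (fun y => exp (φ y)) = fun y => deriv φ y * exp (φ y) := by
  ext y
  rw [deriv_exp (hφ y), mul_comm]

theorem iteratedDeriv_two_exp_comp (hφ : ContDiff ℝ 2 φ) (x : ℝ) :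
    iteratedDeriv 2 (fun y => exp (φ y)) x =
      (deriv (deriv φ) x + deriv φ x ^ 2) * exp (φ x) := by
  have hφ' : Differentiable ℝ (deriv φ) := by
    simpa only [iteratedDeriv_one] using hφ.differentiable_iteratedDeriv' 1
  have hexp : HasDerivAt (fun y => exp (φ y)) (exp (φ x) * deriv φ x) x :=
    (hφ.differentiable two_ne_zero x).hasDerivAt.exp
  rw [iteratedDeriv_succ, iteratedDeriv_one, deriv_exp_comp (hφ.differentiable two_ne_zero),
    ((hφ' x).hasDerivAt.fun_mul hexp).deriv]
  ring

end ExpComp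

section Expansion

variable {φ : ℝ → ℝ} {f : ℝ}

theorem w0_eq (hφ : ContDiff ℝ 3 φ) (hper : Periodic φ 1) (hf : f ≠ 0) (x : ℝ) :
    w0 φ f x = exp (-φ x) * ((1 - exp (-f)) *
      ∑ k ∈ Finset.range 3, iteratedDeriv k (fun y => exp (φ y)) x / f ^ (k + 1) +
      (∫ s in (0:ℝ)..1, iteratedDeriv 3 (fun y => exp (φ y)) (x + s) * exp (-(f * s))) /
        f ^ 3) := by
  set U : ℝ → ℝ := fun y => exp (φ y)
  have hU : ContDiff ℝ 3 U := contDiff_exp.comp hφ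
  have hUper : ∀ k, iteratedDeriv k U (x + 1) = iteratedDeriv k U x :=
    fun k => (hper.comp exp).iteratedDeriv k x
  have hw0 : w0 φ f x = exp (-φ x) * ∫ s in (0:ℝ)..1, U (x + s) * exp (-(f * s)) := by
    rw [w0, ← intervalIntegral.integral_const_mul]
    congr 1
    ext s
    rw [← exp_add, ← exp_add]
    ring_nf
  have hUx : ContDiff ℝ 3 fun s => U (x + s) := hU.comp (contDiff_const.add contDiff_id)
  rw [hw0, integral_mul_exp_neg_mul_eq_sum hUx hf]
  simp only [iteratedDeriv_comp_const_add, add_zero, hUper, Finset.mul_sum]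
  congr 2
  refine Finset.sum_congr rfl fun k _ => ?_
  ring

noncomputable def M0Remainder (φ : ℝ → ℝ) (f : ℝ) : ℝ :=
  ∫ x in (0:ℝ)..1, exp (-φ x) *
    ∫ s in (0:ℝ)..1, iteratedDeriv 3 (fun y => exp (φ y)) (x + s) * exp (-(f * s))

theorem M0_eq (hφ : ContDiff ℝ 3 φ) (hper : Periodic φ 1) (hf : f ≠ 0) :
    M0 φ f = (1 - exp (-f)) * (1 / f + (∫ x in (0:ℝ)..1, deriv φ x ^ 2) / f ^ 3) +
      M0Remainder φ f / f ^ 3 := by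
  set U : ℝ → ℝ := fun y => exp (φ y)
  set R : ℝ → ℝ := fun x => ∫ s in (0:ℝ)..1, iteratedDeriv 3 U (x + s) * exp (-(f * s))
  have hφ2 : ContDiff ℝ 2 φ := hφ.of_le (by norm_num)
  have hd : Differentiable ℝ φ := hφ.differentiable (by norm_num)
  have hd' : ContDiff ℝ 1 (deriv φ) := hφ2.deriv' (n := 1)
  have hc' : Continuous (deriv φ) := hd'.continuous
  have hc'' : Continuous (deriv (deriv φ)) := hd'.continuous_deriv le_rfl
  have hU3 : Continuous (iteratedDeriv 3 U) := (contDiff_exp.comp hφ).continuous_iteratedDeriv' 3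
  have hR : Continuous R :=
    continuous_parametric_intervalIntegral_of_continuous' (by fun_prop) 0 1
  have hpt : ∀ x, w0 φ f x = (1 - exp (-f)) *
      (1 / f + (deriv φ x / f ^ 2 + deriv (deriv φ) x / f ^ 3) + deriv φ x ^ 2 / f ^ 3) +
      exp (-φ x) * R x / f ^ 3 := by
    intro x
    rw [w0_eq hφ hper hf]
    simp only [Finset.sum_range_succ, Finset.sum_range_zero, iteratedDeriv_zero, iteratedDeriv_one,
      deriv_exp_comp hd, iteratedDeriv_two_exp_comp hφ2]
    rw [exp_neg (φ x)]
    field_simp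
    ring
  have hD : ∫ x in (0:ℝ)..1, (deriv φ x / f ^ 2 + deriv (deriv φ) x / f ^ 3) = 0 :=
    Periodic.intervalIntegral_eq_zero_of_hasDerivAt (G := fun x => φ x / f ^ 2 + deriv φ x / f ^ 3)
      (fun x => by simp only [hper x, hper.deriv x])
      (fun x => ((hd x).hasDerivAt.div_const _).add
        ((hd'.differentiable one_ne_zero x).hasDerivAt.div_const _)) (by fun_prop)
  rw [M0, intervalIntegral.integral_congr fun x _ => hpt x,
    intervalIntegral.integral_add (Continuous.intervalIntegrable (by fun_prop) _ _)
      (Continuous.intervalIntegrable (by fun_prop) _ _),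
    intervalIntegral.integral_const_mul,
    intervalIntegral.integral_add (Continuous.intervalIntegrable (by fun_prop) _ _)
      (Continuous.intervalIntegrable (by fun_prop) _ _),
    intervalIntegral.integral_add (Continuous.intervalIntegrable (by fun_prop) _ _)
      (Continuous.intervalIntegrable (by fun_prop) _ _), hD,
    intervalIntegral.integral_div, intervalIntegral.integral_div]
  simp [M0Remainder, R, U]

theorem isBigO_M0Remainder (hφ : ContDiff ℝ 3 φ) (hper : Periodic φ 1) :
    M0Remainder φ =O[atTop] fun f => f⁻¹ := by
  obtain ⟨B₁, hB₁⟩ := (hper.comp fun t => exp (-t)).exists_abs_le one_ne_zero (by fun_prop)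
  obtain ⟨B₂, hB₂⟩ := ((hper.comp exp).iteratedDeriv 3).exists_abs_le one_ne_zero
    ((contDiff_exp.comp hφ).continuous_iteratedDeriv' 3)
  refine IsBigO.of_bound (B₁ * B₂) ?_
  filter_upwards [eventually_gt_atTop 0] with f hf
  have hB₁_nonneg : 0 ≤ B₁ := (abs_nonneg _).trans (hB₁ 0)
  have hbound := intervalIntegral.norm_integral_le_of_norm_le_const (a := 0) (b := 1)
    (C := B₁ * (B₂ / f))
    (f := fun x => exp (-φ x) *
      ∫ s in (0:ℝ)..1, iteratedDeriv 3 (fun y => exp (φ y)) (x + s) * exp (-(f * s)))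
    fun x _ => by
      rw [Real.norm_eq_abs, abs_mul]
      exact mul_le_mul (hB₁ x) (abs_integral_mul_exp_neg_mul_le (fun s => hB₂ (x + s)) hf)
        (abs_nonneg _) hB₁_nonneg
  rw [norm_inv, Real.norm_of_nonneg hf.le, ← div_eq_mul_inv, mul_div_assoc]
  simpa [M0Remainder] using hbound

end Expansion

theorem isBigO_exp_neg_one_div_pow (n : ℕ) :
    (fun x : ℝ => exp (-x)) =O[atTop] fun x => 1 / x ^ n := by
  refine (isLittleO_exp_neg_mul_rpow_atTop one_pos (-n)).isBigO.congr' (by simp) ?_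
  filter_upwards [eventually_gt_atTop 0] with x hx
  rw [rpow_neg hx.le, rpow_natCast, one_div]

theorem stmt_15 (φ : ℝ → ℝ) (hφ : ContDiff ℝ 3 φ) (hφper : ∀ x, φ (x + 1) = φ x) :
    (fun f => f * M0 φ f - 1 - (1 / f ^ 2) * ∫ x in (0:ℝ)..1, (deriv φ x) ^ 2)
      =O[atTop] (fun f => 1 / f ^ 3) := by
  set c := ∫ x in (0:ℝ)..1, deriv φ x ^ 2
  have hbounded : (fun f : ℝ => 1 + c / f ^ 2) =O[atTop] fun _ => (1 : ℝ) :=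
    (tendsto_const_nhds.add
      (tendsto_const_nhds.div_atTop (tendsto_pow_atTop two_ne_zero))).isBigO_one ℝ
  have hexp : (fun f => exp (-f) * (1 + c / f ^ 2)) =O[atTop] fun f => 1 / f ^ 3 := by
    simpa only [mul_one] using (isBigO_exp_neg_one_div_pow 3).mul hbounded
  have hrem : (fun f => M0Remainder φ f / f ^ 2) =O[atTop] fun f => 1 / f ^ 3 :=
    ((isBigO_M0Remainder hφ hφper).mul (isBigO_refl (fun f : ℝ => 1 / f ^ 2) atTop)).congr
      (fun f => by ring) (fun f => by ring)
  refine EventuallyEq.trans_isBigO ?_ (hexp.neg_left.add hrem)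
  filter_upwards [eventually_ne_atTop 0] with f hf
  rw [M0_eq hφ hφper hf]
  field_simp
  ring
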